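/- Let ν be a probability measure on ℝ^L and let D ⊆ ℝ^L be a measurable set such that ν-almost every h ∈ D is nonzero. Let μ* > 0 and define the policy P*(h) = max(0, P^KKT_h(μ*)) for h ∈ D. Assume P* is ν-integrable on D with ∫_D P*(h) dν(h) = P̄, and assume h ↦ R_h(P*(h)) is ν-integrable on D. Then P* is an optimal power policy: for every measurable Q : ℝ^L → [0,∞) with ∫_D Q(h) dν(h) ≤ P̄ and h ↦ R_h(Q(h)) ν-integrable on D, one has ∫_D R_h(Q(h)) dν(h) ≤ ∫_D R_h(P*(h)) dν(h). -/

import Mathlib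

open scoped BigOperators Classical
open Finset

noncomputable section

/-- Euclidean inner product on `Fin L → ℝ`. -/
def ip {L : ℕ} (x y : Fin L → ℝ) : ℝ := ∑ i, x i * y i

/-- Squared Euclidean norm on `Fin L → ℝ`. -/
def nsq {L : ℕ} (x : Fin L → ℝ) : ℝ := ∑ i, (x i) ^ 2

/-- ε(h) = ‖h‖²‖a‖² − ⟨h,a⟩². -/
def eps {L : ℕ} (a h : Fin L → ℝ) : ℝ := nsq h * nsq a - (ip h a) ^ 2

/-- Symmetric-policy computation rate R_h(P). -/
def Rsym {L : ℕ} (a h : Fin L → ℝ) (P : ℝ) : ℝ :=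
  (1 / 2) * Real.logb 2 ((1 + P * nsq h) / (nsq a + P * eps a h))

/-- The vector √p∘h with entries √(p_l)·h_l. -/
def sqp {L : ℕ} (p h : Fin L → ℝ) : Fin L → ℝ := fun l => Real.sqrt (p l) * h l

/-- Asymmetric-policy computation rate R(h,p). -/
def Rasym {L : ℕ} (a h p : Fin L → ℝ) : ℝ :=
  (1 / 2) * Real.logb 2 ((1 + nsq (sqp p h)) /
    (nsq a + (nsq (sqp p h) * nsq a - (ip (sqp p h) a) ^ 2)))

/-- The KKT water-filling-type solution P^KKT_h(λ). -/
def PKKT {L : ℕ} (a h : Fin L → ℝ) (lam : ℝ) : ℝ :=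
  if ∃ t : ℝ, h = t • a then 1 / lam - 1 / nsq h
  else (-(2 * nsq h * nsq a - (ip h a) ^ 2) +
      Real.sqrt ((2 * nsq h * nsq a - (ip h a) ^ 2) ^ 2 -
        4 * (nsq h * eps a h) * (nsq a - (ip h a) ^ 2 / lam))) /
    (2 * (nsq h * eps a h))

open MeasureTheory
open Real

/-!
Lagrangian duality. With `c = μ* / (2 ln 2)`, for every channel `h ≠ 0` the clipped KKT power
`P*(h)` maximises `R_h(P) - c P` over `P ≥ 0`; integrating this pointwise inequality and using
`∫ Q ≤ P̄ = ∫ P*` gives the claim.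

Pointwise, `log ((1 + P‖h‖²)/(‖a‖² + P ε))` has marginal gain `⟨h,a⟩² / ((1 + P‖h‖²)(‖a‖² + P ε))`,
and `P^KKT_h(μ*)` is the point where this equals `μ*`: it is the larger root of the quadratic
obtained by clearing denominators (a linear equation when `ε(h) = 0`, i.e. `h ∥ a`). The
comparison of two powers only needs `log x ≤ x - 1`.
-/

section Vectors

variable {L : ℕ}

lemma nsq_nonneg (x : Fin L → ℝ) : 0 ≤ nsq x :=
  sum_nonneg fun i _ => sq_nonneg (x i)

lemma nsq_eq_zero_iff {x : Fin L → ℝ} : nsq x = 0 ↔ x = 0 := by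
  rw [nsq, sum_eq_zero_iff_of_nonneg fun i _ => sq_nonneg (x i)]
  simp [funext_iff]

lemma nsq_pos {x : Fin L → ℝ} (hx : x ≠ 0) : 0 < nsq x :=
  (nsq_nonneg x).lt_of_ne' (nsq_eq_zero_iff.not.mpr hx)

lemma nsq_smul (t : ℝ) (x : Fin L → ℝ) : nsq (t • x) = t ^ 2 * nsq x := by
  simp only [nsq, Pi.smul_apply, smul_eq_mul, mul_pow, mul_sum]

lemma ip_smul_left (t : ℝ) (x y : Fin L → ℝ) : ip (t • x) y = t * ip x y := by
  simp only [ip, Pi.smul_apply, smul_eq_mul, mul_sum, mul_assoc]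

lemma ip_self (x : Fin L → ℝ) : ip x x = nsq x := by
  simp only [ip, nsq, sq]

lemma eps_nonneg (a h : Fin L → ℝ) : 0 ≤ eps a h := by
  have := sum_mul_sq_le_sq_mul_sq univ h a
  simp only [eps, ip, nsq]
  linarith

lemma eps_smul_self (t : ℝ) (a : Fin L → ℝ) : eps a (t • a) = 0 := by
  simp only [eps, nsq_smul, ip_smul_left, ip_self]
  ring

lemma ip_sq_eq (a h : Fin L → ℝ) : ip h a ^ 2 = nsq h * nsq a - eps a h := by
  simp only [eps]
  ring

lemma nsq_smul_sub_smul (X Y : ℝ) (x y : Fin L → ℝ) :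
    nsq (X • x - Y • y) = X ^ 2 * nsq x - 2 * X * Y * ip y x + Y ^ 2 * nsq y := by
  simp only [nsq, ip, Pi.sub_apply, Pi.smul_apply, smul_eq_mul, mul_sum, ← sum_sub_distrib,
    ← sum_add_distrib]
  exact sum_congr rfl fun i _ => by ring

lemma nsq_nsq_smul_sub_ip_smul (a h : Fin L → ℝ) :
    nsq (nsq h • a - ip h a • h) = nsq h * eps a h := by
  rw [nsq_smul_sub_smul, eps]
  ring

lemma exists_eq_smul_of_eps_eq_zero {a h : Fin L → ℝ} (ha : a ≠ 0) (hh : h ≠ 0)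
    (he : eps a h = 0) : ∃ t : ℝ, h = t • a := by
  have hdep : nsq h • a = ip h a • h := by
    rw [← sub_eq_zero, ← nsq_eq_zero_iff, nsq_nsq_smul_sub_ip_smul, he, mul_zero]
  have hip : ip h a ≠ 0 := by
    intro h0
    rw [h0, zero_smul, smul_eq_zero] at hdep
    exact hdep.elim (nsq_pos hh).ne' ha
  exact ⟨(ip h a)⁻¹ * nsq h, by rw [mul_smul, hdep, inv_smul_smul₀ hip]⟩

end Vectors

section Scalar

variable {A H E : ℝ}

lemma log_rate_sub_le (hA : 0 < A) (hH : 0 ≤ H) (hE : 0 ≤ E) {p q : ℝ} (hp : 0 ≤ p)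
    (hq : 0 ≤ q) :
    log ((1 + q * H) / (A + q * E)) - log ((1 + p * H) / (A + p * E))
      ≤ (q - p) * (H * A - E) / ((1 + p * H) * (A + q * E)) := by
  rw [← log_div (by positivity) (by positivity)]
  calc log ((1 + q * H) / (A + q * E) / ((1 + p * H) / (A + p * E)))
      ≤ (1 + q * H) / (A + q * E) / ((1 + p * H) / (A + p * E)) - 1 :=
        log_le_sub_one_of_pos (by positivity)
    _ = (q - p) * (H * A - E) / ((1 + p * H) * (A + q * E)) := by
        field_simp
        ring

lemma log_rate_sub_mul_le_of_kkt {μ p q : ℝ} (hA : 0 < A) (hH : 0 ≤ H) (hE : 0 ≤ E)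
    (hμ : 0 ≤ μ) (hp : 0 ≤ p) (hq : 0 ≤ q)
    (hdual : H * A - E ≤ μ * ((1 + p * H) * (A + p * E)))
    (hslack : 0 < p → μ * ((1 + p * H) * (A + p * E)) ≤ H * A - E) :
    log ((1 + q * H) / (A + q * E)) - μ * q ≤ log ((1 + p * H) / (A + p * E)) - μ * p := by
  have hv : 0 < (1 + p * H) * (A + q * E) := by positivity
  suffices (q - p) * (H * A - E) ≤ μ * (q - p) * ((1 + p * H) * (A + q * E)) by
    linarith [(log_rate_sub_le hA hH hE hp hq).trans ((div_le_iff₀ hv).mpr this)]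
  rcases le_or_gt p q with hpq | hqp
  · have hg : (1 + p * H) * (A + p * E) ≤ (1 + p * H) * (A + q * E) := by gcongr
    nlinarith [mul_le_mul_of_nonneg_left hg hμ]
  · have hg : (1 + p * H) * (A + q * E) ≤ (1 + p * H) * (A + p * E) := by gcongr
    nlinarith [mul_le_mul_of_nonneg_left hg hμ, hslack (hq.trans_lt hqp)]

lemma quadratic_nonneg_of_root_le {d b c : ℝ} (hd : 0 < d) (hdisc : 0 ≤ discrim d b c) {x : ℝ}
    (hx : (-b + √(discrim d b c)) / (2 * d) ≤ x) : 0 ≤ d * (x * x) + b * x + c := by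
  set s := √(discrim d b c)
  have hss : b ^ 2 - 4 * d * c = s * s := (mul_self_sqrt hdisc).symm
  have hfac : 4 * d * (d * (x * x) + b * x + c) = (2 * d * x + b - s) * (2 * d * x + b + s) := by
    linear_combination -hss
  have hx' : 0 ≤ 2 * d * x + b - s := by
    rw [div_le_iff₀ (by positivity)] at hx
    linarith
  have hs : 0 ≤ s := sqrt_nonneg _
  refine (mul_nonneg_iff_of_pos_left (by positivity : (0 : ℝ) < 4 * d)).mp ?_
  rw [hfac]
  exact mul_nonneg hx' (by linarith)

end Scalar

section KKT

variable {L : ℕ} {a h : Fin L → ℝ} {μ : ℝ}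

lemma PKKT_spec_of_collinear (hh : h ≠ 0) (hμ : 0 < μ) (hcol : ∃ t : ℝ, h = t • a) :
    μ * ((1 + PKKT a h μ * nsq h) * (nsq a + PKKT a h μ * eps a h)) = ip h a ^ 2 ∧
    ∀ P, PKKT a h μ ≤ P → ip h a ^ 2 ≤ μ * ((1 + P * nsq h) * (nsq a + P * eps a h)) := by
  have hPKKT : PKKT a h μ = 1 / μ - 1 / nsq h := by rw [PKKT, if_pos hcol]
  obtain ⟨t, rfl⟩ := hcol
  have hH := nsq_pos hh
  have hgap : ∀ P, μ * ((1 + P * nsq (t • a)) * (nsq a + P * eps a (t • a))) - ip (t • a) a ^ 2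
      = μ * nsq a * nsq (t • a) * (P - PKKT a (t • a) μ) := by
    intro P
    rw [ip_sq_eq, eps_smul_self, hPKKT]
    field_simp
    ring
  refine ⟨by rw [← sub_eq_zero, hgap, sub_self, mul_zero], fun P hP => ?_⟩
  rw [← sub_nonneg, hgap]
  exact mul_nonneg (mul_nonneg (mul_nonneg hμ.le (nsq_nonneg a)) hH.le) (sub_nonneg.mpr hP)

lemma PKKT_spec_of_not_collinear (ha : a ≠ 0) (hh : h ≠ 0) (hμ : 0 < μ)
    (hcol : ¬∃ t : ℝ, h = t • a) :
    μ * ((1 + PKKT a h μ * nsq h) * (nsq a + PKKT a h μ * eps a h)) = ip h a ^ 2 ∧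
    ∀ P, PKKT a h μ ≤ P → ip h a ^ 2 ≤ μ * ((1 + P * nsq h) * (nsq a + P * eps a h)) := by
  have hE : 0 < eps a h := (eps_nonneg a h).lt_of_ne'
    fun he => hcol (exists_eq_smul_of_eps_eq_zero ha hh he)
  set d := nsq h * eps a h
  set b := 2 * nsq h * nsq a - ip h a ^ 2
  set c := nsq a - ip h a ^ 2 / μ
  have hd : 0 < d := mul_pos (nsq_pos hh) hE
  have hdisc : 0 ≤ discrim d b c := by
    have : discrim d b c = (nsq h * nsq a - eps a h) ^ 2 + 4 * d * (ip h a ^ 2 / μ) := by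
      simp only [discrim, d, b, c]
      rw [ip_sq_eq]
      ring
    rw [this]
    positivity
  have hPKKT : PKKT a h μ = (-b + √(discrim d b c)) / (2 * d) := by rw [PKKT, if_neg hcol]; rfl
  have hgap : ∀ P, μ * ((1 + P * nsq h) * (nsq a + P * eps a h)) - ip h a ^ 2
      = μ * (d * (P * P) + b * P + c) := by
    intro P
    simp only [d, b, c, eps]
    field_simp
    ring
  have hroot : d * (PKKT a h μ * PKKT a h μ) + b * PKKT a h μ + c = 0 :=
    (quadratic_eq_zero_iff hd.ne' (mul_self_sqrt hdisc).symm _).mpr (Or.inl hPKKT)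
  refine ⟨by rw [← sub_eq_zero, hgap, hroot, mul_zero], fun P hP => ?_⟩
  rw [← sub_nonneg, hgap]
  exact mul_nonneg hμ.le (quadratic_nonneg_of_root_le hd hdisc (hPKKT ▸ hP))

lemma PKKT_spec (ha : a ≠ 0) (hh : h ≠ 0) (hμ : 0 < μ) :
    μ * ((1 + PKKT a h μ * nsq h) * (nsq a + PKKT a h μ * eps a h)) = ip h a ^ 2 ∧
    ∀ P, PKKT a h μ ≤ P → ip h a ^ 2 ≤ μ * ((1 + P * nsq h) * (nsq a + P * eps a h)) := by
  by_cases hcol : ∃ t : ℝ, h = t • a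
  · exact PKKT_spec_of_collinear hh hμ hcol
  · exact PKKT_spec_of_not_collinear ha hh hμ hcol

lemma Rsym_sub_mul_le_Rsym_max_PKKT (ha : a ≠ 0) (hh : h ≠ 0) (hμ : 0 < μ) {q : ℝ}
    (hq : 0 ≤ q) :
    Rsym a h q - μ / (2 * log 2) * q
      ≤ Rsym a h (max 0 (PKKT a h μ)) - μ / (2 * log 2) * max 0 (PKKT a h μ) := by
  obtain ⟨hroot, hmono⟩ := PKKT_spec ha hh hμ
  have hslack : 0 < max 0 (PKKT a h μ) → max 0 (PKKT a h μ) = PKKT a h μ := fun hp =>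
    max_eq_right (lt_max_iff.mp hp |>.resolve_left (lt_irrefl 0)).le
  have key := log_rate_sub_mul_le_of_kkt (nsq_pos ha) (nsq_nonneg h) (eps_nonneg a h) hμ.le
    (le_max_left 0 (PKKT a h μ)) hq
    (by rw [← ip_sq_eq]; exact hmono _ (le_max_right _ _))
    (fun hp => by rw [← ip_sq_eq, hslack hp, hroot])
  have hlog2 : 0 < 2 * log 2 := by positivity
  have hR : ∀ P, Rsym a h P - μ / (2 * log 2) * P
      = (log ((1 + P * nsq h) / (nsq a + P * eps a h)) - μ * P) / (2 * log 2) := by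
    intro P
    rw [Rsym, logb]
    ring
  rw [hR, hR]
  exact div_le_div_of_nonneg_right key hlog2.le

end KKT

section Integration

variable {α : Type*} [MeasurableSpace α] {m : Measure α}

lemma integrable_and_integral_le_of_lintegral_ofReal_le {f : α → ℝ} {B : ℝ}
    (hf : AEStronglyMeasurable f m) (hf0 : 0 ≤ᵐ[m] f) (hB : 0 ≤ B)
    (hfB : ∫⁻ x, ENNReal.ofReal (f x) ∂m ≤ ENNReal.ofReal B) :
    Integrable f m ∧ ∫ x, f x ∂m ≤ B := by
  have hint : Integrable f m :=
    ⟨hf, (hasFiniteIntegral_iff_ofReal hf0).mpr (hfB.trans_lt ENNReal.ofReal_lt_top)⟩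
  refine ⟨hint, (ENNReal.ofReal_le_ofReal_iff hB).mp ?_⟩
  rwa [ofReal_integral_eq_lintegral_ofReal hint hf0]

lemma integral_le_integral_of_lagrangian {F G q p : α → ℝ} {c : ℝ} (hF : Integrable F m)
    (hG : Integrable G m) (hq : Integrable q m) (hp : Integrable p m) (hc : 0 ≤ c)
    (hpt : ∀ᵐ x ∂m, F x - c * q x ≤ G x - c * p x) (hqp : ∫ x, q x ∂m ≤ ∫ x, p x ∂m) :
    ∫ x, F x ∂m ≤ ∫ x, G x ∂m := by
  have := integral_mono_ae (f := fun x => F x - c * q x) (g := fun x => G x - c * p x)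
    (hF.sub (hq.const_mul c)) (hG.sub (hp.const_mul c)) hpt
  rw [integral_sub hF (hq.const_mul c), integral_sub hG (hp.const_mul c), integral_const_mul,
    integral_const_mul] at this
  linarith [mul_le_mul_of_nonneg_left hqp hc]

end Integration

theorem stmt18_general {L : ℕ}
    (a : Fin L → ℝ) (ha : a ≠ 0)
    (ν : Measure (Fin L → ℝ))
    (D : Set (Fin L → ℝ)) (hD : MeasurableSet D)
    (hDne : ∀ᵐ x ∂ν, x ∈ D → x ≠ 0)
    (μstar : ℝ) (hμ : 0 < μstar)
    (Pbar : ℝ)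
    (hPint : IntegrableOn (fun x => max 0 (PKKT a x μstar)) D ν)
    (hPsum : ∫ x in D, max 0 (PKKT a x μstar) ∂ν = Pbar)
    (hRint : IntegrableOn (fun x => Rsym a x (max 0 (PKKT a x μstar))) D ν) :
    ∀ Q : (Fin L → ℝ) → ℝ, Measurable Q → (∀ x, 0 ≤ Q x) →
      (∫⁻ x in D, ENNReal.ofReal (Q x) ∂ν) ≤ ENNReal.ofReal Pbar →
      IntegrableOn (fun x => Rsym a x (Q x)) D ν →
      ∫ x in D, Rsym a x (Q x) ∂ν
        ≤ ∫ x in D, Rsym a x (max 0 (PKKT a x μstar)) ∂ν := by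
  intro Q hQm hQnn hQbud hRQint
  have hPbar : 0 ≤ Pbar := hPsum ▸ integral_nonneg fun x => le_max_left _ _
  obtain ⟨hQint, hQle⟩ := integrable_and_integral_le_of_lintegral_ofReal_le
    hQm.aestronglyMeasurable (ae_of_all _ hQnn) hPbar hQbud
  refine integral_le_integral_of_lagrangian (c := μstar / (2 * log 2)) hRQint hRint hQint hPint
    (by positivity) ?_ (hPsum ▸ hQle)
  rw [ae_restrict_iff' hD]
  filter_upwards [hDne] with x hx hxD
  exact Rsym_sub_mul_le_Rsym_max_PKKT ha (hx hxD) hμ (hQnn x)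

/-- in the continuous case, the clipped KKT policy P*(h) = max(0, P^KKT_h(μ*))
meeting the power budget with equality is optimal among all measurable nonnegative policies
meeting the budget. -/
theorem stmt18 {L : ℕ} (hL : 1 ≤ L)
    (a : Fin L → ℝ) (ha : a ≠ 0) (haint : ∀ i, ∃ n : ℤ, a i = (n : ℝ))
    (ν : Measure (Fin L → ℝ)) [IsProbabilityMeasure ν]
    (D : Set (Fin L → ℝ)) (hD : MeasurableSet D)
    (hDne : ∀ᵐ x ∂ν, x ∈ D → x ≠ 0)
    (μstar : ℝ) (hμ : 0 < μstar)
    (Pbar : ℝ) (hPbar : 0 < Pbar)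
    (hPint : IntegrableOn (fun x => max 0 (PKKT a x μstar)) D ν)
    (hPsum : ∫ x in D, max 0 (PKKT a x μstar) ∂ν = Pbar)
    (hRint : IntegrableOn (fun x => Rsym a x (max 0 (PKKT a x μstar))) D ν) :
    ∀ Q : (Fin L → ℝ) → ℝ, Measurable Q → (∀ x, 0 ≤ Q x) →
      (∫⁻ x in D, ENNReal.ofReal (Q x) ∂ν) ≤ ENNReal.ofReal Pbar →
      IntegrableOn (fun x => Rsym a x (Q x)) D ν →
      ∫ x in D, Rsym a x (Q x) ∂ν
        ≤ ∫ x in D, Rsym a x (max 0 (PKKT a x μstar)) ∂ν :=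
  stmt18_general a ha ν D hD hDne μstar hμ Pbar hPint hPsum hRint
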